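/- arXiv:1310.4831 — 2 statements merged into one kernel-verified Lean document; each statement's English description precedes it below -/
import Mathlib

section
/- Let K be an n×n complex symmetric matrix such that I + K is invertible and such that (I + K)⁻¹(I − K K̄)(I + K̄)⁻¹ is positive definite (as a Hermitian matrix). Then every eigenvalue of the positive semidefinite matrix K K̄* = K K̄ is strictly less than 1; equivalently, the spectral norm of K is strictly less than 1. -/
/-!
Since `K` is symmetric, `K̄ = Kᴴ`, so the hypothesis says that `(1 + K)⁻¹ (1 - K Kᴴ) ((1 + K)⁻¹)ᴴ`
is positive definite. Positive definiteness is invariant under congruence by an invertible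
matrix, hence `1 - K Kᴴ` is positive definite. Testing it and the positive semidefinite `K Kᴴ` on
an eigenvector of `K Kᴴ` for `μ` gives `0 ≤ μ < 1`.
-/

open Matrix Complex
open scoped ComplexOrder

namespace Matrix

lemma map_starRingEnd_eq_conjTranspose {n α : Type*} [CommSemiring α] [StarRing α]
    {K : Matrix n n α} (hK : Kᵀ = K) : K.map (starRingEnd α) = Kᴴ := by
  rw [conjTranspose, hK]
  rfl

variable {n : Type*} [Fintype n]

lemma exists_mulVec_eq_smul_of_mem_spectrum {𝕜 : Type*} [Field 𝕜] [DecidableEq n]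
    {A : Matrix n n 𝕜} {μ : 𝕜} (hμ : μ ∈ spectrum 𝕜 A) : ∃ v ≠ 0, A *ᵥ v = μ • v := by
  rw [← AlgEquiv.spectrum_eq toLinAlgEquiv', ← Module.End.hasEigenvalue_iff_mem_spectrum] at hμ
  obtain ⟨v, hv⟩ := hμ.exists_hasEigenvector
  exact ⟨v, hv.2, hv.apply_eq_smul⟩

variable {𝕜 : Type*} [RCLike 𝕜] {A : Matrix n n 𝕜} {μ : 𝕜} {v : n → 𝕜}

lemma star_dotProduct_mulVec_of_mulVec_eq_smul (hv : A *ᵥ v = μ • v) :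
    star v ⬝ᵥ (A *ᵥ v) = μ * (star v ⬝ᵥ v) := by
  rw [hv, dotProduct_smul, smul_eq_mul]

lemma PosSemidef.nonneg_of_mulVec_eq_smul (hA : A.PosSemidef) (hv0 : v ≠ 0)
    (hv : A *ᵥ v = μ • v) : 0 ≤ μ := by
  have h := hA.dotProduct_mulVec_nonneg v
  rwa [star_dotProduct_mulVec_of_mulVec_eq_smul hv, ← zero_mul (star v ⬝ᵥ v),
    mul_le_mul_iff_of_pos_right (dotProduct_star_self_pos_iff.mpr hv0)] at h

lemma PosDef.pos_of_mulVec_eq_smul (hA : A.PosDef) (hv0 : v ≠ 0)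
    (hv : A *ᵥ v = μ • v) : 0 < μ := by
  have h := hA.dotProduct_mulVec_pos hv0
  rwa [star_dotProduct_mulVec_of_mulVec_eq_smul hv, ← zero_mul (star v ⬝ᵥ v),
    mul_lt_mul_iff_of_pos_right (dotProduct_star_self_pos_iff.mpr hv0)] at h

lemma norm_lt_one_of_mem_spectrum [DecidableEq n] (hA : A.PosSemidef) (h1A : (1 - A).PosDef)
    (hμ : μ ∈ spectrum 𝕜 A) : ‖μ‖ < 1 := by
  obtain ⟨v, hv0, hv⟩ := exists_mulVec_eq_smul_of_mem_spectrum hμ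
  have hμ0 : 0 ≤ μ := hA.nonneg_of_mulVec_eq_smul hv0 hv
  have hμ1 : μ < 1 := sub_pos.mp <| h1A.pos_of_mulVec_eq_smul hv0 <| by
    rw [sub_mulVec, one_mulVec, hv, sub_smul, one_smul]
  rw [← @RCLike.ofReal_lt_ofReal 𝕜, RCLike.norm_of_nonneg' hμ0]
  rwa [RCLike.ofReal_one]

end Matrix

theorem stmt_4 {n : ℕ} (K : Matrix (Fin n) (Fin n) ℂ)
    (hK : K = Kᵀ) (hUnit : IsUnit (1 + K))
    (hPD : Matrix.PosDef
      ((1 + K)⁻¹ * (1 - K * K.map (starRingEnd ℂ))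
        * (1 + K.map (starRingEnd ℂ))⁻¹)) :
    ∀ μ ∈ spectrum ℂ (K * K.map (starRingEnd ℂ)), ‖μ‖ < 1 := by
  rw [map_starRingEnd_eq_conjTranspose hK.symm] at hPD ⊢
  have hA : (1 - K * Kᴴ).PosDef := by
    refine (isUnit_nonsing_inv_iff.mpr hUnit).posDef_star_right_conjugate_iff.mp ?_
    rwa [star_eq_conjTranspose, conjTranspose_nonsing_inv, conjTranspose_add, conjTranspose_one]
  exact fun μ => norm_lt_one_of_mem_spectrum (posSemidef_self_mul_conjTranspose K) hA
end

section
/- Let K₀ be an n×n complex matrix with singular value decomposition K₀ = U Σ V^H (U, V unitary, Σ diagonal with nonnegative real entries), and let K be the 2n×2n symmetric matrix with blocks [[0, K₀],[K₀ᵀ, 0]]. Let D be a complex diagonal (hence symmetric) matrix commuting with Σ, and define M = (U ⊕ V̄)(σ_z ⊗ D)(U^H ⊕ Vᵀ). If D is Hermitian (real diagonal), then M is Hermitian and MK = −(MK)ᵀ. -/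
/-!
In the basis given by the singular vectors, `M` is the block-diagonal matrix
`U D Uᴴ ⊕ -(V̄ D Vᵀ)`, which is Hermitian as soon as `D` is. Since `D` commutes with `Σ`,
conjugating by the unitaries gives `(U D Uᴴ) K₀ = K₀ (V D Vᴴ)`, and transposing the lower block
(using `Dᵀ = D` for diagonal `D`) turns this into the antisymmetry of the two off-diagonal blocks
of `M K`.
-/

open Matrix

namespace Matrix

theorem fromBlocks_zero_mul_fromBlocks_zero {l m n o p q α : Type*} [Fintype l] [Fintype m]
    [NonUnitalNonAssocSemiring α] (A : Matrix n l α) (B : Matrix o m α) (A' : Matrix l p α)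
    (B' : Matrix m q α) :
    fromBlocks A 0 0 B * fromBlocks A' 0 0 B' = fromBlocks (A * A') 0 0 (B * B') := by
  simp [fromBlocks_multiply]

theorem fromBlocks_antidiag_eq_neg_transpose {m n α : Type*} [AddGroup α]
    {X : Matrix m n α} {Y : Matrix n m α} (h : X = -Yᵀ) :
    fromBlocks 0 X Y 0 = -(fromBlocks 0 X Y 0)ᵀ := by
  rw [fromBlocks_transpose, fromBlocks_neg, h]
  simp

theorem mul_mul_conjTranspose_mul_svd {k l m n α : Type*} [Fintype m] [Fintype n] [Fintype k]
    [Fintype l] [DecidableEq m] [DecidableEq n] [Semiring α] [StarRing α] {U : Matrix k m α}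
    {V : Matrix l n α} {S : Matrix m n α} {D₁ : Matrix m m α} {D₂ : Matrix n n α}
    (hU : Uᴴ * U = 1) (hV : Vᴴ * V = 1) (hD : D₁ * S = S * D₂) :
    U * D₁ * Uᴴ * (U * S * Vᴴ) = U * S * Vᴴ * (V * D₂ * Vᴴ) :=
  calc U * D₁ * Uᴴ * (U * S * Vᴴ)
      = U * (D₁ * (Uᴴ * U) * S) * Vᴴ := by simp only [Matrix.mul_assoc]
    _ = U * (S * ((Vᴴ * V) * D₂)) * Vᴴ := by rw [hU, hV, Matrix.mul_one, Matrix.one_mul, hD]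
    _ = U * S * Vᴴ * (V * D₂ * Vᴴ) := by simp only [Matrix.mul_assoc]

end Matrix

theorem stmt_14_general {n : ℕ} (U V K₀ Sig D : Matrix (Fin n) (Fin n) ℂ)
    (hUunit : Uᴴ * U = 1 ∧ U * Uᴴ = 1)
    (hVunit : Vᴴ * V = 1 ∧ V * Vᴴ = 1)
    (hSVD : K₀ = U * Sig * Vᴴ)
    (d : Fin n → ℂ) (hDdiag : D = Matrix.diagonal d)
    (hDSig : D * Sig = Sig * D)
    (hDH : D.IsHermitian)
    (K M : Matrix (Fin n ⊕ Fin n) (Fin n ⊕ Fin n) ℂ)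
    (hK : K = Matrix.fromBlocks 0 K₀ K₀ᵀ 0)
    (hM : M = Matrix.fromBlocks U 0 0 (V.map (starRingEnd ℂ))
        * Matrix.fromBlocks D 0 0 (-D)
        * Matrix.fromBlocks Uᴴ 0 0 Vᵀ) :
    M.IsHermitian ∧ M * K = -(M * K)ᵀ := by
  have hVbar : V.map (starRingEnd ℂ) = Vᵀᴴ := by
    ext; simp
  have hMblock : M = fromBlocks (U * D * Uᴴ) 0 0 (Vᵀᴴ * -D * Vᵀ) := by
    rw [hM, hVbar, fromBlocks_zero_mul_fromBlocks_zero, fromBlocks_zero_mul_fromBlocks_zero]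
  have hDt : Dᵀ = D := by rw [hDdiag, diagonal_transpose]
  have hcomm : U * D * Uᴴ * K₀ = K₀ * (V * D * Vᴴ) := by
    rw [hSVD]
    exact mul_mul_conjTranspose_mul_svd hUunit.1 hVunit.1 hDSig
  refine ⟨?_, ?_⟩
  · rw [hMblock]
    have hlower := isHermitian_mul_mul_conjTranspose Vᵀᴴ hDH.neg
    rw [conjTranspose_conjTranspose] at hlower
    exact (isHermitian_mul_mul_conjTranspose U hDH).fromBlocks conjTranspose_zero hlower
  · rw [hMblock, hK, fromBlocks_multiply]
    simp only [Matrix.mul_zero, Matrix.zero_mul, add_zero, zero_add]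
    refine fromBlocks_antidiag_eq_neg_transpose ?_
    rw [hcomm, Matrix.mul_neg, Matrix.neg_mul, Matrix.neg_mul, transpose_neg, neg_neg]
    simp only [transpose_mul, conjTranspose_transpose_eq_transpose_conjTranspose,
      transpose_transpose, hDt, Matrix.mul_assoc]

theorem stmt_14 {n : ℕ} (U V K₀ Sig D : Matrix (Fin n) (Fin n) ℂ)
    (σ : Fin n → ℝ) (hσ : ∀ i, 0 ≤ σ i)
    (hSig : Sig = Matrix.diagonal fun i => (σ i : ℂ))
    (hUunit : Uᴴ * U = 1 ∧ U * Uᴴ = 1)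
    (hVunit : Vᴴ * V = 1 ∧ V * Vᴴ = 1)
    (hSVD : K₀ = U * Sig * Vᴴ)
    (d : Fin n → ℂ) (hDdiag : D = Matrix.diagonal d)
    (hDSig : D * Sig = Sig * D)
    (hDH : D.IsHermitian)
    (K M : Matrix (Fin n ⊕ Fin n) (Fin n ⊕ Fin n) ℂ)
    (hK : K = Matrix.fromBlocks 0 K₀ K₀ᵀ 0)
    (hM : M = Matrix.fromBlocks U 0 0 (V.map (starRingEnd ℂ))
        * Matrix.fromBlocks D 0 0 (-D)
        * Matrix.fromBlocks Uᴴ 0 0 Vᵀ) :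
    M.IsHermitian ∧ M * K = -(M * K)ᵀ :=
  stmt_14_general U V K₀ Sig D hUunit hVunit hSVD d hDdiag hDSig hDH K M hK hM
end
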